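/- Fix p ∈ (1,∞), n ≥ 1, and γ ∈ [0,1). Let E ⊊ ℝ^{n+1} be nonempty. If there exists α ∈ (0,∞) such that the weight (x,t) ↦ d_p((x,t),E)^{-α} belongs to A₁⁺(γ), then E is γ-FIT parabolic weakly porous. -/

import Mathlib

open MeasureTheory Set Filter ENNReal NNReal

noncomputable section

/-- The (half-open) spatial cube of center `x` and edge length `2L`. -/
def pQ (n : ℕ) (x : Fin n → ℝ) (L : ℝ) : Set (Fin n → ℝ) :=
  Set.pi Set.univ fun i => Ico (x i - L) (x i + L)

/-- The lower part `R⁻(γ)` of the parabolic rectangle of center `(x,t)` and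
edge length `L`. -/
def pRm (n : ℕ) (p γ : ℝ) (x : Fin n → ℝ) (t L : ℝ) : Set ((Fin n → ℝ) × ℝ) :=
  pQ n x L ×ˢ Ico (t - L ^ p) (t - γ * L ^ p)

/-- The upper part `R⁺(γ)` of the parabolic rectangle. -/
def pRp (n : ℕ) (p γ : ℝ) (x : Fin n → ℝ) (t L : ℝ) : Set ((Fin n → ℝ) × ℝ) :=
  pQ n x L ×ˢ Ico (t + γ * L ^ p) (t + L ^ p)

/-- The shifted part `R⁺⁺(γ)` of the parabolic rectangle. -/
def pRpp (n : ℕ) (p γ : ℝ) (x : Fin n → ℝ) (t L : ℝ) : Set ((Fin n → ℝ) × ℝ) :=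
  pQ n x L ×ˢ Ico (t + (1 + 2 * γ) * L ^ p) (t + (2 + γ) * L ^ p)

/-- The `PBLO⁻_γ(ℝ^{n+1})` seminorm. -/
def pbloNorm (n : ℕ) (p γ : ℝ) (f : (Fin n → ℝ) × ℝ → ℝ) : ℝ≥0∞ :=
  ⨆ (x : Fin n → ℝ) (t : ℝ) (L : ℝ) (_ : 0 < L),
    (volume (pRm n p γ x t L))⁻¹ *
        (∫⁻ z in pRm n p γ x t L,
          ENNReal.ofReal
            (max (f z - essInf f (volume.restrict (pRp n p γ x t L))) 0)) +
      (volume (pRpp n p γ x t L))⁻¹ *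
        (∫⁻ z in pRpp n p γ x t L,
          ENNReal.ofReal
            (max (essInf f (volume.restrict (pRp n p γ x t L)) - f z) 0))

/-- `f ∈ PBLO⁻_γ(ℝ^{n+1})`. -/
def MemPBLOminus (n : ℕ) (p γ : ℝ) (f : (Fin n → ℝ) × ℝ → ℝ) : Prop :=
  LocallyIntegrable f volume ∧ pbloNorm n p γ f < ⊤

/-- The parabolic Muckenhoupt `A₁⁺(γ)` constant with time lag. -/
def parA1Const (n : ℕ) (p γ : ℝ) (ω : (Fin n → ℝ) × ℝ → ℝ) : ℝ≥0∞ :=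
  ⨆ (x : Fin n → ℝ) (t : ℝ) (L : ℝ) (_ : 0 < L),
    ((volume (pRm n p γ x t L))⁻¹ *
        ∫⁻ z in pRm n p γ x t L, ENNReal.ofReal (ω z)) /
      essInf (fun z => ENNReal.ofReal (ω z)) (volume.restrict (pRp n p γ x t L))

/-- `ω ∈ A₁⁺(γ)`: a weight (nonnegative, locally integrable, positive a.e.)
with finite parabolic `A₁⁺(γ)` constant. -/
def IsParA1plusWeight (n : ℕ) (p γ : ℝ) (ω : (Fin n → ℝ) × ℝ → ℝ) : Prop :=
  LocallyIntegrable ω volume ∧ (∀ z, 0 ≤ ω z) ∧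
    (∀ᵐ z ∂(volume : Measure ((Fin n → ℝ) × ℝ)), 0 < ω z) ∧
    parA1Const n p γ ω < ⊤

/-- `P` is a parabolic dyadic subrectangle (of some generation `j`) of the
set `R` (one of the parts of a parabolic rectangle of edge length `L`):
it is a half-open rectangle contained in `R` whose spatial edge is `L/2^j`
and whose temporal length lies in
`[(1−γ)L^p/2^{pj+1}, (1−γ)L^p/2^{pj}]`. -/
def IsParDyadicRect (n : ℕ) (p γ L : ℝ) (R P : Set ((Fin n → ℝ) × ℝ)) : Prop :=
  P ⊆ R ∧ ∃ (j : ℕ) (y : Fin n → ℝ) (s τ : ℝ),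
    P = (Set.pi Set.univ fun i => Ico (y i) (y i + L / 2 ^ j)) ×ˢ Ico s (s + τ) ∧
    (1 - γ) * L ^ p / (2 : ℝ) ^ (p * (j : ℝ)) / 2 ≤ τ ∧
    τ ≤ (1 - γ) * L ^ p / (2 : ℝ) ^ (p * (j : ℝ))

/-- The volume `|𝓜(R⁺(γ))|` of a largest `E`-free parabolic dyadic
subrectangle of `R⁺(γ)` (as a supremum of volumes). -/
def maxFreeVol (n : ℕ) (p γ : ℝ) (E : Set ((Fin n → ℝ) × ℝ))
    (x : Fin n → ℝ) (t L : ℝ) : ℝ≥0∞ :=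
  ⨆ (P : Set ((Fin n → ℝ) × ℝ))
    (_ : IsParDyadicRect n p γ L (pRp n p γ x t L) P) (_ : P ∩ E = ∅),
    volume P

/-- `E` is `γ`-FIT parabolic weakly porous: there are `c, δ ∈ (0,1)` such
that every parabolic rectangle `R` admits finitely many pairwise disjoint
`E`-free parabolic dyadic subrectangles `P₁, …, P_N` of `R⁻(γ)` with
`|P_j| ≥ δ|𝓜(R⁺(γ))|` for each `j` and `Σ_j |P_j| ≥ c|R⁻(γ)|`. -/
def FITParWeaklyPorous (n : ℕ) (p γ : ℝ) (E : Set ((Fin n → ℝ) × ℝ)) : Prop :=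
  ∃ c δ : ℝ, c ∈ Ioo (0 : ℝ) 1 ∧ δ ∈ Ioo (0 : ℝ) 1 ∧
    ∀ (x : Fin n → ℝ) (t L : ℝ), 0 < L →
      ∃ (N : ℕ) (P : Fin N → Set ((Fin n → ℝ) × ℝ)),
        0 < N ∧
        (∀ i, IsParDyadicRect n p γ L (pRm n p γ x t L) (P i)) ∧
        (∀ i, P i ∩ E = ∅) ∧
        Set.univ.PairwiseDisjoint P ∧
        (∀ i, ENNReal.ofReal δ * maxFreeVol n p γ E x t L ≤ volume (P i)) ∧
        ENNReal.ofReal c * volume (pRm n p γ x t L) ≤ ∑ i, volume (P i)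

/-- The parabolic distance on `ℝ^{n+1}`. -/
def parDist (n : ℕ) (p : ℝ) (z w : (Fin n → ℝ) × ℝ) : ℝ :=
  max (⨆ i : Fin n, |z.1 i - w.1 i|) (|z.2 - w.2| ^ (1 / p))

/-- The parabolic distance of a point `z` to a set `E`. -/
def parDistToSet (n : ℕ) (p : ℝ) (z : (Fin n → ℝ) × ℝ)
    (E : Set ((Fin n → ℝ) × ℝ)) : ℝ :=
  sInf (parDist n p z '' E)

section Helpers

variable {n : ℕ} {p γ : ℝ}

lemma parDist_nonneg' {z w : (Fin n → ℝ) × ℝ} : 0 ≤ parDist n p z w :=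
  le_trans (Real.rpow_nonneg (abs_nonneg _) _) (le_max_right _ _)

lemma parDistToSet_nonneg' {z : (Fin n → ℝ) × ℝ} {E : Set ((Fin n → ℝ) × ℝ)}
    (hne : E.Nonempty) : 0 ≤ parDistToSet n p z E :=
  le_csInf (hne.image _) (by rintro b ⟨w, _, rfl⟩; exact parDist_nonneg')

lemma parDistToSet_le' {z w : (Fin n → ℝ) × ℝ} {E : Set ((Fin n → ℝ) × ℝ)}
    (hw : w ∈ E) : parDistToSet n p z E ≤ parDist n p z w :=
  csInf_le ⟨0, by rintro b ⟨u, _, rfl⟩; exact parDist_nonneg'⟩ (Set.mem_image_of_mem _ hw)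

lemma parDist_le_of_mem_cell (hn : 1 ≤ n) (hp : 1 < p) {y : Fin n → ℝ} {s l τ a : ℝ}
    (ha : 0 ≤ a) (hl : l ≤ a) (hτ : τ ≤ a ^ p) {z w : (Fin n → ℝ) × ℝ}
    (hz : z ∈ (Set.pi Set.univ fun i => Ico (y i) (y i + l)) ×ˢ Ico s (s + τ))
    (hw : w ∈ (Set.pi Set.univ fun i => Ico (y i) (y i + l)) ×ˢ Ico s (s + τ)) :
    parDist n p z w ≤ a := by
  haveI : Nonempty (Fin n) := ⟨⟨0, hn⟩⟩
  obtain ⟨hz1, hz2⟩ := hz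
  obtain ⟨hw1, hw2⟩ := hw
  have hp0 : (0:ℝ) < p := by linarith
  refine max_le (ciSup_le fun i => ?_) ?_
  · have h1 := hz1 i (Set.mem_univ i)
    have h2 := hw1 i (Set.mem_univ i)
    simp only [Set.mem_Ico] at h1 h2
    rw [abs_sub_le_iff]
    constructor <;> linarith
  · simp only [Set.mem_Ico] at hz2 hw2
    have habs : |z.2 - w.2| ≤ a ^ p := by
      rw [abs_sub_le_iff]
      have hτ' : τ ≤ a ^ p := hτ
      constructor <;> linarith
    calc |z.2 - w.2| ^ (1/p) ≤ (a ^ p) ^ (1/p) :=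
          Real.rpow_le_rpow (abs_nonneg _) habs (by positivity)
      _ = a := by rw [one_div, Real.rpow_rpow_inv ha hp0.ne']

lemma volume_cell {y : Fin n → ℝ} {s l τ : ℝ} :
    volume ((Set.pi Set.univ fun i => Ico (y i) (y i + l)) ×ˢ Ico s (s + τ)) =
      ENNReal.ofReal l ^ n * ENNReal.ofReal τ := by
  rw [MeasureTheory.Measure.volume_eq_prod, MeasureTheory.Measure.prod_prod,
    MeasureTheory.volume_pi_pi, Real.volume_Ico, add_sub_cancel_left]
  simp [Real.volume_Ico]

lemma volume_prm (x : Fin n → ℝ) (t L : ℝ) :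
    volume (pRm n p γ x t L) = ENNReal.ofReal (2*L) ^ n * ENNReal.ofReal ((1-γ) * L ^ p) := by
  rw [pRm, pQ, MeasureTheory.Measure.volume_eq_prod, MeasureTheory.Measure.prod_prod,
    MeasureTheory.volume_pi_pi]
  simp [Real.volume_Ico]
  ring_nf
  rw [ENNReal.ofReal_mul' (by norm_num : (0:ℝ) ≤ 2), ENNReal.ofReal_ofNat, mul_pow]; ring

lemma volume_prp (x : Fin n → ℝ) (t L : ℝ) :
    volume (pRp n p γ x t L) = ENNReal.ofReal (2*L) ^ n * ENNReal.ofReal ((1-γ) * L ^ p) := by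
  rw [pRp, pQ, MeasureTheory.Measure.volume_eq_prod, MeasureTheory.Measure.prod_prod,
    MeasureTheory.volume_pi_pi]
  simp [Real.volume_Ico]
  ring_nf
  rw [ENNReal.ofReal_mul' (by norm_num : (0:ℝ) ≤ 2), ENNReal.ofReal_ofNat, mul_pow]; ring

end Helpers
section Grid

/-- Number of temporal subdivisions for the generation-`k` grid. -/
def gridm (p : ℝ) (k : ℕ) : ℕ := ⌈(2:ℝ) ^ (p * (k:ℝ))⌉₊

/-- Temporal length of the generation-`k` grid cells. -/
def gridτ (p γ L : ℝ) (k : ℕ) : ℝ := (1-γ) * L ^ p / gridm p k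

/-- A generation-`k` grid cell of `R⁻(γ)`. -/
def gridCell (n : ℕ) (p γ : ℝ) (x : Fin n → ℝ) (t L : ℝ) (k : ℕ)
    (ab : (Fin n → ℕ) × ℕ) : Set ((Fin n → ℝ) × ℝ) :=
  (Set.pi Set.univ fun i => Ico (x i - L + ab.1 i * (L / 2 ^ k))
      (x i - L + ab.1 i * (L / 2 ^ k) + L / 2 ^ k)) ×ˢ
    Ico (t - L ^ p + ab.2 * gridτ p γ L k)
      (t - L ^ p + ab.2 * gridτ p γ L k + gridτ p γ L k)

variable {n : ℕ} {p γ : ℝ}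

lemma one_le_rpow_pk (hp : 1 < p) (k : ℕ) : (1:ℝ) ≤ (2:ℝ) ^ (p * (k:ℝ)) := by
  rw [show (1:ℝ) = (2:ℝ) ^ (0:ℝ) by simp]
  exact Real.rpow_le_rpow_of_exponent_le one_le_two (by positivity)

lemma gridm_pos (hp : 1 < p) (k : ℕ) : 0 < gridm p k :=
  Nat.ceil_pos.mpr (by positivity)

lemma gridm_ge (k : ℕ) : (2:ℝ) ^ (p * (k:ℝ)) ≤ (gridm p k : ℝ) := Nat.le_ceil _

lemma gridm_le (hp : 1 < p) (k : ℕ) : (gridm p k : ℝ) ≤ 2 * (2:ℝ) ^ (p * (k:ℝ)) := by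
  have h1 : ((gridm p k : ℕ) : ℝ) ≤ (⌊(2:ℝ) ^ (p * (k:ℝ))⌋₊ : ℝ) + 1 := by
    exact_mod_cast Nat.ceil_le_floor_add_one _
  have h2 : (⌊(2:ℝ) ^ (p * (k:ℝ))⌋₊ : ℝ) ≤ (2:ℝ) ^ (p * (k:ℝ)) :=
    Nat.floor_le (by positivity)
  have h3 := one_le_rpow_pk hp k
  linarith

lemma gridτ_pos (hp : 1 < p) (hγ1 : γ < 1) (hL : 0 < L) (k : ℕ) :
    0 < gridτ p γ L k := by
  have := gridm_pos (p := p) hp k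
  have hLp : (0:ℝ) < L ^ p := Real.rpow_pos_of_pos hL p
  apply div_pos (by nlinarith) (by exact_mod_cast this)

lemma gridτ_le (hp : 1 < p) (hγ1 : γ < 1) (hL : 0 < L) (k : ℕ) :
    gridτ p γ L k ≤ (1-γ) * L ^ p / (2:ℝ) ^ (p * (k:ℝ)) := by
  have hLp : (0:ℝ) < L ^ p := Real.rpow_pos_of_pos hL p
  apply div_le_div_of_nonneg_left (by nlinarith) (by positivity) (gridm_ge k)

lemma gridτ_ge (hp : 1 < p) (hγ1 : γ < 1) (hL : 0 < L) (k : ℕ) :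
    (1-γ) * L ^ p / (2:ℝ) ^ (p * (k:ℝ)) / 2 ≤ gridτ p γ L k := by
  have hLp : (0:ℝ) < L ^ p := Real.rpow_pos_of_pos hL p
  have h1 := gridm_le hp k
  have h2 := one_le_rpow_pk hp k
  have h3 : (0:ℝ) < gridm p k := by exact_mod_cast gridm_pos hp k
  rw [div_div]
  calc (1-γ) * L ^ p / ((2:ℝ) ^ (p * (k:ℝ)) * 2) ≤ (1-γ) * L ^ p / (gridm p k : ℝ) := by
        apply div_le_div_of_nonneg_left (by nlinarith) h3 (by linarith)
    _ = gridτ p γ L k := rfl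

lemma gridm_mul_gridτ (hp : 1 < p) (hγ1 : γ < 1) (hL : 0 < L) (k : ℕ) :
    (gridm p k : ℝ) * gridτ p γ L k = (1-γ) * L ^ p := by
  have h3 : (0:ℝ) < gridm p k := by exact_mod_cast gridm_pos hp k
  rw [gridτ]; field_simp

lemma two_pow_succ_mul (hL : 0 < L) (k : ℕ) :
    ((2:ℝ) ^ (k+1)) * (L / 2 ^ k) = 2 * L := by
  have : ((2:ℝ) ^ k) ≠ 0 := by positivity
  field_simp
  ring

lemma gridCell_isDyadic (hn : 1 ≤ n) (hp : 1 < p) (hγ0 : 0 ≤ γ) (hγ1 : γ < 1)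
    {x : Fin n → ℝ} {t L : ℝ} (hL : 0 < L) (k : ℕ) {ab : (Fin n → ℕ) × ℕ}
    (ha : ∀ i, ab.1 i < 2 ^ (k+1)) (hb : ab.2 < gridm p k) :
    IsParDyadicRect n p γ L (pRm n p γ x t L) (gridCell n p γ x t L k ab) := by
  have hl : (0:ℝ) < L / 2 ^ k := by positivity
  constructor
  · rintro ⟨z1, z2⟩ ⟨h1, h2⟩
    constructor
    · intro i _
      have h := h1 i (Set.mem_univ i)
      simp only [Set.mem_Ico] at h ⊢
      have ha' : ((ab.1 i : ℝ) + 1) ≤ (2:ℝ) ^ (k+1) := by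
        exact_mod_cast Nat.succ_le_of_lt (ha i)
      have h2' : ((ab.1 i : ℝ) + 1) * (L / 2 ^ k) ≤ (2:ℝ) ^ (k+1) * (L / 2 ^ k) :=
        mul_le_mul_of_nonneg_right ha' hl.le
      rw [two_pow_succ_mul hL] at h2'
      have hnn : (0:ℝ) ≤ (ab.1 i : ℝ) * (L / 2 ^ k) := by positivity
      constructor <;> nlinarith
    · have hτ := gridτ_pos hp hγ1 hL (L := L) k
      simp only [Set.mem_Ico] at h2 ⊢
      have hb' : ((ab.2 : ℝ) + 1) ≤ (gridm p k : ℝ) := by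
        exact_mod_cast Nat.succ_le_of_lt hb
      have h2' : ((ab.2 : ℝ) + 1) * gridτ p γ L k ≤ (gridm p k : ℝ) * gridτ p γ L k :=
        mul_le_mul_of_nonneg_right hb' hτ.le
      rw [gridm_mul_gridτ hp hγ1 hL] at h2'
      have hnn : (0:ℝ) ≤ (ab.2 : ℝ) * gridτ p γ L k := by positivity
      constructor <;> nlinarith
  · exact ⟨k, _, _, gridτ p γ L k, rfl, gridτ_ge hp hγ1 hL k, gridτ_le hp hγ1 hL k⟩

lemma mem_gridCell_of_mem_pRm (hp : 1 < p) (hγ0 : 0 ≤ γ) (hγ1 : γ < 1)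
    {x : Fin n → ℝ} {t L : ℝ} (hL : 0 < L) (k : ℕ) {z : (Fin n → ℝ) × ℝ}
    (hz : z ∈ pRm n p γ x t L) :
    ∃ ab : (Fin n → ℕ) × ℕ, (∀ i, ab.1 i < 2 ^ (k+1)) ∧ ab.2 < gridm p k ∧
      z ∈ gridCell n p γ x t L k ab := by
  have hl : (0:ℝ) < L / 2 ^ k := by positivity
  have hτ := gridτ_pos hp hγ1 hL (L := L) k
  obtain ⟨h1, h2⟩ := hz
  refine ⟨⟨fun i => ⌊(z.1 i - (x i - L)) / (L / 2 ^ k)⌋₊,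
    ⌊(z.2 - (t - L ^ p)) / gridτ p γ L k⌋₊⟩, fun i => ?_, ?_, fun i _ => ?_, ?_⟩
  · have h := h1 i (Set.mem_univ i)
    simp only [Set.mem_Ico] at h
    rw [Nat.floor_lt (div_nonneg (by linarith) hl.le)]
    rw [div_lt_iff₀ hl]
    push_cast
    rw [two_pow_succ_mul hL]
    linarith
  · simp only [Set.mem_Ico] at h2
    rw [Nat.floor_lt (div_nonneg (by linarith) hτ.le)]
    rw [div_lt_iff₀ hτ]
    rw [gridm_mul_gridτ hp hγ1 hL]
    linarith
  · have h := h1 i (Set.mem_univ i)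
    simp only [Set.mem_Ico] at h ⊢
    set u := z.1 i - (x i - L) with hu
    have hu0 : 0 ≤ u := by simp [hu]; linarith
    have hfl : (⌊u / (L / 2 ^ k)⌋₊ : ℝ) * (L / 2 ^ k) ≤ u := by
      rw [← le_div_iff₀ hl]
      exact Nat.floor_le (by positivity)
    have hfu : u < ((⌊u / (L / 2 ^ k)⌋₊ : ℝ) + 1) * (L / 2 ^ k) := by
      rw [← div_lt_iff₀ hl]
      exact Nat.lt_floor_add_one _
    constructor <;> nlinarith
  · simp only [Set.mem_Ico] at h2 ⊢
    set u := z.2 - (t - L ^ p) with hu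
    have hu0 : 0 ≤ u := by simp [hu]; linarith
    have hfl : (⌊u / gridτ p γ L k⌋₊ : ℝ) * gridτ p γ L k ≤ u := by
      rw [← le_div_iff₀ hτ]
      exact Nat.floor_le (by positivity)
    have hfu : u < ((⌊u / gridτ p γ L k⌋₊ : ℝ) + 1) * gridτ p γ L k := by
      rw [← div_lt_iff₀ hτ]
      exact Nat.lt_floor_add_one _
    constructor <;> nlinarith

lemma Ico_grid_disjoint {c l : ℝ} (hl : 0 < l) {a b : ℕ} (hab : a ≠ b) {u : ℝ}
    (h1 : u ∈ Ico (c + a*l) (c + a*l + l)) (h2 : u ∈ Ico (c + b*l) (c + b*l + l)) :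
    False := by
  simp only [Set.mem_Ico] at h1 h2
  rcases lt_or_gt_of_ne hab with h | h
  · have : ((a:ℝ) + 1) ≤ b := by exact_mod_cast Nat.succ_le_of_lt h
    nlinarith
  · have : ((b:ℝ) + 1) ≤ a := by exact_mod_cast Nat.succ_le_of_lt h
    nlinarith

lemma gridCell_disjoint (hp : 1 < p) (hγ1 : γ < 1)
    {x : Fin n → ℝ} {t L : ℝ} (hL : 0 < L) (k : ℕ) {ab ab' : (Fin n → ℕ) × ℕ}
    (hab : ab ≠ ab') :
    Disjoint (gridCell n p γ x t L k ab) (gridCell n p γ x t L k ab') := by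
  have hl : (0:ℝ) < L / 2 ^ k := by positivity
  have hτ := gridτ_pos hp hγ1 hL (L := L) k
  rw [Set.disjoint_left]
  rintro z ⟨h1, h2⟩ ⟨h1', h2'⟩
  by_cases hA : ab.1 = ab'.1
  · have hB : ab.2 ≠ ab'.2 := fun hB => hab (Prod.ext hA hB)
    exact Ico_grid_disjoint hτ hB h2 h2'
  · obtain ⟨i, hi⟩ := Function.ne_iff.mp hA
    exact Ico_grid_disjoint hl hi (h1 i (Set.mem_univ i)) (h1' i (Set.mem_univ i))

lemma volume_gridCell {x : Fin n → ℝ} {t L : ℝ} (k : ℕ) (ab : (Fin n → ℕ) × ℕ) :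
    volume (gridCell n p γ x t L k ab) =
      ENNReal.ofReal (L / 2 ^ k) ^ n * ENNReal.ofReal (gridτ p γ L k) :=
  volume_cell

end Grid
section MaxFree

variable {n : ℕ} {p γ : ℝ}

lemma div_pow_rpow {L : ℝ} (hL : 0 < L) (j : ℕ) :
    (L / 2 ^ j) ^ p = L ^ p / (2:ℝ) ^ (p * (j:ℝ)) := by
  rw [Real.div_rpow hL.le (by positivity), ← Real.rpow_natCast (2:ℝ) j,
    ← Real.rpow_mul (by norm_num), mul_comm]

lemma maxFreeVol_le_volume_pRp (E : Set ((Fin n → ℝ) × ℝ)) (x : Fin n → ℝ) (t L : ℝ) :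
    maxFreeVol n p γ E x t L ≤ volume (pRp n p γ x t L) :=
  iSup_le fun _ => iSup_le fun hdy => iSup_le fun _ => measure_mono hdy.1

lemma volume_pRp_pos (hp : 1 < p) (hγ1 : γ < 1) {x : Fin n → ℝ} {t L : ℝ} (hL : 0 < L) :
    0 < volume (pRp n p γ x t L) := by
  rw [volume_prp]
  have hLp : (0:ℝ) < L ^ p := Real.rpow_pos_of_pos hL p
  exact ENNReal.mul_pos (pow_ne_zero _ (ENNReal.ofReal_pos.mpr (by linarith)).ne')
    (ENNReal.ofReal_pos.mpr (by nlinarith)).ne'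

lemma volume_pRp_ne_top {x : Fin n → ℝ} {t L : ℝ} :
    volume (pRp n p γ x t L) ≠ ⊤ := by
  rw [volume_prp]
  exact ENNReal.mul_ne_top (pow_ne_top ENNReal.ofReal_ne_top) ENNReal.ofReal_ne_top

lemma volume_pRm_pos (hp : 1 < p) (hγ1 : γ < 1) {x : Fin n → ℝ} {t L : ℝ} (hL : 0 < L) :
    0 < volume (pRm n p γ x t L) := by
  rw [volume_prm]
  have hLp : (0:ℝ) < L ^ p := Real.rpow_pos_of_pos hL p
  exact ENNReal.mul_pos (pow_ne_zero _ (ENNReal.ofReal_pos.mpr (by linarith)).ne')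
    (ENNReal.ofReal_pos.mpr (by nlinarith)).ne'

lemma volume_pRm_ne_top {x : Fin n → ℝ} {t L : ℝ} :
    volume (pRm n p γ x t L) ≠ ⊤ := by
  rw [volume_prm]
  exact ENNReal.mul_ne_top (pow_ne_top ENNReal.ofReal_ne_top) ENNReal.ofReal_ne_top

lemma exists_cell_containing (hn : 1 ≤ n) (hp : 1 < p) (hγ0 : 0 ≤ γ) (hγ1 : γ < 1)
    {x : Fin n → ℝ} {t L : ℝ} (hL : 0 < L) (j : ℕ) {z : (Fin n → ℝ) × ℝ}
    (hz : z ∈ pRp n p γ x t L) :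
    ∃ P, IsParDyadicRect n p γ L (pRp n p γ x t L) P ∧ z ∈ P ∧
      (volume P ≠ 0) ∧ ∀ w ∈ P, parDist n p z w ≤ L / 2 ^ j := by
  have hLp : (0:ℝ) < L ^ p := Real.rpow_pos_of_pos hL p
  have hl : (0:ℝ) < L / 2 ^ j := by positivity
  have hl2 : L / 2 ^ j ≤ 2 * L := by
    have h1 : (1:ℝ) ≤ 2 ^ j := one_le_pow₀ (by norm_num)
    rw [div_le_iff₀ (by positivity)]
    nlinarith
  have hr1 : (1:ℝ) ≤ (2:ℝ) ^ (p * (j:ℝ)) := one_le_rpow_pk hp j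
  set τ : ℝ := (1-γ) * L ^ p / (2:ℝ) ^ (p * (j:ℝ)) with hτdef
  have hτpos : 0 < τ := by apply div_pos (by nlinarith) (by positivity)
  have hτle : τ ≤ (1-γ) * L ^ p := by
    rw [hτdef, div_le_iff₀ (by positivity)]
    nlinarith [mul_le_mul_of_nonneg_left hr1 (show (0:ℝ) ≤ (1-γ)*L^p by nlinarith)]
  set y : Fin n → ℝ := fun i => min (z.1 i) (x i + L - L / 2 ^ j) with hy
  set s : ℝ := min z.2 (t + L ^ p - τ) with hs
  obtain ⟨hz1, hz2⟩ := hz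
  simp only [pQ, Set.mem_pi, Set.mem_univ, forall_true_left, Set.mem_Ico] at hz1 hz2
  set P : Set ((Fin n → ℝ) × ℝ) :=
    (Set.pi Set.univ fun i => Ico (y i) (y i + L / 2 ^ j)) ×ˢ Ico s (s + τ) with hP
  have hzmem : z ∈ P := by
    constructor
    · intro i _
      have hzi := hz1 i
      simp only [Set.mem_Ico]
      refine ⟨min_le_left _ _, ?_⟩
      rw [hy]
      rcases min_cases (z.1 i) (x i + L - L / 2 ^ j) with ⟨he, _⟩ | ⟨he, hlt⟩ <;>
        simp only [he] <;> linarith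
    · simp only [Set.mem_Ico]
      refine ⟨min_le_left _ _, ?_⟩
      rw [hs]
      rcases min_cases z.2 (t + L ^ p - τ) with ⟨he, _⟩ | ⟨he, hlt⟩ <;>
        simp only [he] <;> linarith
  have hsub : P ⊆ pRp n p γ x t L := by
    rintro ⟨w1, w2⟩ ⟨h1, h2⟩
    constructor
    · intro i _
      have h := h1 i (Set.mem_univ i)
      have hzi := hz1 i
      simp only [Set.mem_Ico] at h ⊢
      have hy1 : x i - L ≤ y i := by
        rw [hy]; simp only [le_min_iff]
        constructor <;> linarith
      have hy2 : y i + L / 2 ^ j ≤ x i + L := by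
        rw [hy]
        have : min (z.1 i) (x i + L - L / 2 ^ j) ≤ x i + L - L / 2 ^ j := min_le_right _ _
        linarith
      constructor <;> linarith
    · simp only [Set.mem_Ico] at h2 ⊢
      have hs1 : t + γ * L ^ p ≤ s := by
        rw [hs]; simp only [le_min_iff]
        constructor <;> linarith
      have hs2 : s + τ ≤ t + L ^ p := by
        rw [hs]
        have : min z.2 (t + L ^ p - τ) ≤ t + L ^ p - τ := min_le_right _ _
        linarith
      constructor <;> linarith
  have hτl : τ ≤ (L / 2 ^ j) ^ p := by
    rw [div_pow_rpow hL, hτdef]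
    apply div_le_div_of_nonneg_right ?_ (by positivity)
    nlinarith
  refine ⟨P, ⟨hsub, j, y, s, τ, rfl, by rw [hτdef]; linarith, le_refl _⟩, hzmem, ?_, ?_⟩
  · rw [hP, volume_cell]
    exact (ENNReal.mul_pos (pow_ne_zero _ (ENNReal.ofReal_pos.mpr hl).ne')
      (ENNReal.ofReal_pos.mpr hτpos).ne').ne'
  · intro w hw
    exact parDist_le_of_mem_cell hn hp hl.le (le_refl _) hτl hzmem hw

end MaxFree
section StepA

variable {n : ℕ} {p γ : ℝ}

lemma le_maxFreeVol {E : Set ((Fin n → ℝ) × ℝ)} {x : Fin n → ℝ} {t L : ℝ}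
    {P : Set ((Fin n → ℝ) × ℝ)} (hdy : IsParDyadicRect n p γ L (pRp n p γ x t L) P)
    (hfree : P ∩ E = ∅) : volume P ≤ maxFreeVol n p γ E x t L :=
  le_iSup_of_le P (le_iSup_of_le hdy (le_iSup_of_le hfree le_rfl))

lemma maxFreeVol_ne_zero (hn : 1 ≤ n) (hp : 1 < p) (hγ0 : 0 ≤ γ) (hγ1 : γ < 1)
    {E : Set ((Fin n → ℝ) × ℝ)} (hne : E.Nonempty) {x : Fin n → ℝ} {t L : ℝ} (hL : 0 < L)
    {α : ℝ} (hα : 0 < α)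
    (hpos : ∀ᵐ z : (Fin n → ℝ) × ℝ, 0 < parDistToSet n p z E ^ (-α)) :
    maxFreeVol n p γ E x t L ≠ 0 := by
  intro h0
  have hzero : ∀ z ∈ pRp n p γ x t L, parDistToSet n p z E ^ (-α) = 0 := by
    intro z hz
    have hd0 : ∀ j : ℕ, parDistToSet n p z E ≤ L / 2 ^ j := by
      intro j
      obtain ⟨P, hdy, hzm, hvol, hdist⟩ := exists_cell_containing hn hp hγ0 hγ1 hL j hz
      have hPE : (P ∩ E) ≠ ∅ := by
        intro hPE
        exact hvol (le_antisymm (h0 ▸ le_maxFreeVol hdy hPE) (zero_le))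
      obtain ⟨w, hwP, hwE⟩ := Set.nonempty_iff_ne_empty.mpr hPE
      exact le_trans (parDistToSet_le' hwE) (hdist w hwP)
    have hd : parDistToSet n p z E = 0 := by
      by_contra hd
      have hd' : 0 < parDistToSet n p z E :=
        (parDistToSet_nonneg' hne).lt_of_ne (Ne.symm hd)
      obtain ⟨j, hj⟩ := exists_pow_lt_of_lt_one (div_pos hd' hL) (by norm_num : (1:ℝ)/2 < 1)
      have : L / 2 ^ j < parDistToSet n p z E := by
        have h2 : ((1:ℝ)/2) ^ j = 1 / 2 ^ j := by
          rw [div_pow, one_pow]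
        rw [h2, div_lt_div_iff₀ (by positivity) hL] at hj
        rw [div_lt_iff₀ (by positivity)]
        linarith [hj]
      exact absurd (hd0 j) (not_le.mpr this)
    rw [hd, Real.zero_rpow (by linarith : -α ≠ 0)]
  have hsub : pRp n p γ x t L ⊆ {z | ¬ 0 < parDistToSet n p z E ^ (-α)} := by
    intro z hz
    simp only [Set.mem_setOf_eq, not_lt]
    rw [hzero z hz]
  have h1 : volume (pRp n p γ x t L) = 0 := by
    have h2 : volume {z : (Fin n → ℝ) × ℝ | ¬ 0 < parDistToSet n p z E ^ (-α)} = 0 :=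
      hpos
    exact le_antisymm (h2 ▸ measure_mono hsub) (zero_le)
  exact absurd h1 (volume_pRp_pos hp hγ1 hL).ne'

lemma exists_P0 (hp : 1 < p) (hγ1 : γ < 1) {E : Set ((Fin n → ℝ) × ℝ)}
    {x : Fin n → ℝ} {t L : ℝ}
    (hM0 : maxFreeVol n p γ E x t L ≠ 0) :
    ∃ P, IsParDyadicRect n p γ L (pRp n p γ x t L) P ∧ P ∩ E = ∅ ∧
      maxFreeVol n p γ E x t L ≤ 2 * volume P := by
  have hMt : maxFreeVol n p γ E x t L ≠ ⊤ :=
    fun h => volume_pRp_ne_top (le_antisymm le_top (h ▸ maxFreeVol_le_volume_pRp E x t L))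
  have hhalf := ENNReal.half_lt_self hM0 hMt
  rw [maxFreeVol] at hhalf
  simp only [lt_iSup_iff] at hhalf
  obtain ⟨P, hdy, hfree, hlt⟩ := hhalf
  refine ⟨P, hdy, hfree, ?_⟩
  calc maxFreeVol n p γ E x t L = maxFreeVol n p γ E x t L / 2 + maxFreeVol n p γ E x t L / 2 :=
        (ENNReal.add_halves _).symm
    _ ≤ volume P + volume P := add_le_add hlt.le hlt.le
    _ = 2 * volume P := (two_mul _).symm

end StepA
section StepB

/-- The geometric constant `κ`. -/
def porK (p γ : ℝ) : ℝ := min (1/4 : ℝ) (((1-γ)/8) ^ (1/p))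

variable {n : ℕ} {p γ : ℝ}

lemma porK_pos (hp : 1 < p) (hγ1 : γ < 1) : 0 < porK p γ := by
  apply lt_min (by norm_num)
  exact Real.rpow_pos_of_pos (by linarith) _

lemma porK_le : porK p γ ≤ 1/4 := min_le_left _ _

lemma measurableSet_pRp {x : Fin n → ℝ} {t L : ℝ} : MeasurableSet (pRp n p γ x t L) :=
  (MeasurableSet.univ_pi (fun _ => measurableSet_Ico)).prod measurableSet_Ico

lemma measurableSet_pRm {x : Fin n → ℝ} {t L : ℝ} : MeasurableSet (pRm n p γ x t L) :=
  (MeasurableSet.univ_pi (fun _ => measurableSet_Ico)).prod measurableSet_Ico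

lemma essInf_le_of_freeRect (hn : 1 ≤ n) (hp : 1 < p) (hγ0 : 0 ≤ γ) (hγ1 : γ < 1)
    {E : Set ((Fin n → ℝ) × ℝ)} (hne : E.Nonempty) {x : Fin n → ℝ} {t L : ℝ}
    (hL : 0 < L) {α : ℝ} (hα : 0 < α) {P₀ : Set ((Fin n → ℝ) × ℝ)}
    (hsub : P₀ ⊆ pRp n p γ x t L) {j₀ : ℕ} {y : Fin n → ℝ} {s τ₀ : ℝ}
    (hPdef : P₀ = (Set.pi Set.univ fun i => Ico (y i) (y i + L / 2 ^ j₀)) ×ˢ Ico s (s + τ₀))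
    (hτlow : (1 - γ) * L ^ p / (2:ℝ) ^ (p * (j₀:ℝ)) / 2 ≤ τ₀)
    (hfree : P₀ ∩ E = ∅) :
    essInf (fun z => ENNReal.ofReal (parDistToSet n p z E ^ (-α)))
        (volume.restrict (pRp n p γ x t L)) ≤
      ENNReal.ofReal ((porK p γ * (L / 2 ^ j₀)) ^ (-α)) := by
  haveI : Nonempty (Fin n) := ⟨⟨0, hn⟩⟩
  set ℓ₀ : ℝ := L / 2 ^ j₀ with hℓ₀
  have hℓpos : 0 < ℓ₀ := by positivity
  have hκ := porK_pos (γ := γ) hp hγ1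
  have hLp : (0:ℝ) < L ^ p := Real.rpow_pos_of_pos hL p
  have hτ₀low : (1 - γ) * ℓ₀ ^ p / 2 ≤ τ₀ := by
    rw [hℓ₀, div_pow_rpow hL]
    calc (1-γ) * (L ^ p / (2:ℝ) ^ (p * (j₀:ℝ))) / 2
        = (1-γ) * L ^ p / (2:ℝ) ^ (p * (j₀:ℝ)) / 2 := by ring
      _ ≤ τ₀ := hτlow
  have hℓp : (0:ℝ) < ℓ₀ ^ p := Real.rpow_pos_of_pos hℓpos p
  have hτ₀pos : 0 < τ₀ := lt_of_lt_of_le (by nlinarith) hτ₀low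
  set Z₀ : Set ((Fin n → ℝ) × ℝ) :=
    (Set.pi Set.univ fun i => Ico (y i + ℓ₀/4) (y i + ℓ₀/4 + ℓ₀/2)) ×ˢ
      Ico (s + τ₀/4) (s + τ₀/4 + τ₀/2) with hZ₀
  have hZsub : Z₀ ⊆ P₀ := by
    rw [hPdef]
    rintro ⟨z1, z2⟩ ⟨h1, h2⟩
    constructor
    · intro i _
      have h := h1 i (Set.mem_univ i)
      simp only [Set.mem_Ico] at h ⊢
      constructor <;> linarith [h.1, h.2]
    · simp only [Set.mem_Ico] at h2 ⊢
      constructor <;> linarith [h2.1, h2.2]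
  have hdist : ∀ z ∈ Z₀, porK p γ * ℓ₀ ≤ parDistToSet n p z E := by
    intro z hz
    apply le_csInf (hne.image _)
    rintro b ⟨w, hwE, rfl⟩
    have hwP : w ∉ P₀ := fun hwP =>
      Set.eq_empty_iff_forall_notMem.mp hfree w ⟨hwP, hwE⟩
    rw [hPdef] at hwP
    obtain ⟨hz1, hz2⟩ := hz
    by_cases hw1 : w.1 ∈ Set.pi Set.univ fun i => Ico (y i) (y i + ℓ₀)
    · -- temporal escape
      have hw2 : w.2 ∉ Ico s (s + τ₀) := by
        intro hw2
        exact hwP ⟨hw1, hw2⟩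
      simp only [Set.mem_Ico, not_and, not_lt] at hw2
      simp only [Set.mem_Ico] at hz2
      have habs : τ₀/4 ≤ |z.2 - w.2| := by
        rcases lt_or_ge w.2 s with h | h
        · exact le_abs.mpr (Or.inl (by linarith [hz2.1]))
        · have := hw2 h
          exact le_abs.mpr (Or.inr (by linarith [hz2.2]))
      have h8 : (1-γ)/8 * ℓ₀ ^ p ≤ τ₀/4 := by linarith
      have hrp : ((1-γ)/8) ^ (1/p) * ℓ₀ ≤ |z.2 - w.2| ^ (1/p) := by
        calc ((1-γ)/8) ^ (1/p) * ℓ₀ = ((1-γ)/8 * ℓ₀ ^ p) ^ (1/p) := by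
              rw [Real.mul_rpow (by linarith) (le_of_lt hℓp), one_div,
                Real.rpow_rpow_inv hℓpos.le (by linarith : p ≠ 0)]
          _ ≤ |z.2 - w.2| ^ (1/p) :=
              Real.rpow_le_rpow (by nlinarith) (le_trans h8 habs) (by positivity)
      calc porK p γ * ℓ₀ ≤ ((1-γ)/8) ^ (1/p) * ℓ₀ :=
            mul_le_mul_of_nonneg_right (min_le_right _ _) hℓpos.le
        _ ≤ |z.2 - w.2| ^ (1/p) := hrp
        _ ≤ parDist n p z w := le_max_right _ _
    · -- spatial escape
      simp only [Set.mem_pi, Set.mem_univ, forall_true_left, Set.mem_Ico, not_forall] at hw1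
      obtain ⟨i, hi⟩ := hw1
      push_neg at hi
      have hzi := hz1 i (Set.mem_univ i)
      simp only [Set.mem_Ico] at hzi
      have habs : ℓ₀/4 ≤ |z.1 i - w.1 i| := by
        rcases lt_or_ge (w.1 i) (y i) with h | h
        · exact le_abs.mpr (Or.inl (by linarith [hzi.1]))
        · have := hi h
          exact le_abs.mpr (Or.inr (by linarith [hzi.2]))
      have hsup : |z.1 i - w.1 i| ≤ ⨆ i, |z.1 i - w.1 i| :=
        le_ciSup (f := fun i => |z.1 i - w.1 i|)
          (Set.Finite.bddAbove (Set.finite_range _)) i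
      calc porK p γ * ℓ₀ ≤ (1/4) * ℓ₀ :=
            mul_le_mul_of_nonneg_right porK_le hℓpos.le
        _ = ℓ₀/4 := by ring
        _ ≤ |z.1 i - w.1 i| := habs
        _ ≤ ⨆ i, |z.1 i - w.1 i| := hsup
        _ ≤ parDist n p z w := le_max_left _ _
  -- Z₀ has positive measure and on it the weight is small
  have hZvol : volume Z₀ ≠ 0 := by
    rw [hZ₀, volume_cell]
    exact (ENNReal.mul_pos (pow_ne_zero _ (ENNReal.ofReal_pos.mpr (by linarith)).ne')
      (ENNReal.ofReal_pos.mpr (by linarith)).ne').ne'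
  set f : (Fin n → ℝ) × ℝ → ℝ≥0∞ :=
    fun z => ENNReal.ofReal (parDistToSet n p z E ^ (-α)) with hf
  set μr := volume.restrict (pRp n p γ x t L) with hμr
  have hbad : μr {z | ¬ essInf f μr ≤ f z} = 0 := by
    exact ae_iff.mp (ae_essInf_le (f := f) (μ := μr))
  have hZμr : μr Z₀ = volume Z₀ := by
    rw [hμr, Measure.restrict_apply' measurableSet_pRp,
      Set.inter_eq_self_of_subset_left (hZsub.trans hsub)]
  have hgood : (Z₀ ∩ {z | essInf f μr ≤ f z}).Nonempty := by
    apply nonempty_of_measure_ne_zero (μ := μr)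
    intro hcon
    have hsplit : Z₀ ⊆ (Z₀ ∩ {z | essInf f μr ≤ f z}) ∪ {z | ¬ essInf f μr ≤ f z} := by
      intro z hz
      by_cases h : essInf f μr ≤ f z
      · exact Or.inl ⟨hz, h⟩
      · exact Or.inr h
    have := measure_mono (μ := μr) hsplit
    rw [hZμr] at this
    apply hZvol
    refine le_antisymm ?_ (zero_le)
    calc volume Z₀ ≤ μr (Z₀ ∩ {z | essInf f μr ≤ f z}) + μr {z | ¬ essInf f μr ≤ f z} :=
          le_trans this (measure_union_le _ _)
      _ = 0 := by rw [hcon, hbad, add_zero]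
  obtain ⟨z, hzZ, hzg⟩ := hgood
  calc essInf f μr ≤ f z := hzg
    _ ≤ ENNReal.ofReal ((porK p γ * ℓ₀) ^ (-α)) := by
        apply ENNReal.ofReal_le_ofReal
        exact Real.rpow_le_rpow_of_nonpos (by positivity) (hdist z hzZ) (by linarith)

end StepB
section StepCD

/-- The threshold constant `ε`. -/
def porE (p γ CT α : ℝ) : ℝ := porK p γ * min ((1/(2*(CT+1))) ^ (1/α)) 1

variable {n : ℕ} {p γ : ℝ}

lemma porE_pos (hp : 1 < p) (hγ1 : γ < 1) {CT α : ℝ} (hCT : 0 ≤ CT) (hα : 0 < α) :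
    0 < porE p γ CT α := by
  apply mul_pos (porK_pos hp hγ1)
  apply lt_min _ one_pos
  apply Real.rpow_pos_of_pos
  have h : 0 < CT + 1 := by linarith
  positivity

lemma porE_le (hp : 1 < p) (hγ1 : γ < 1) {CT α : ℝ} (hCT : 0 ≤ CT) (hα : 0 < α) :
    porE p γ CT α ≤ 1/4 := by
  have h1 : min ((1/(2*(CT+1))) ^ (1/α)) 1 ≤ 1 := min_le_right _ _
  have h2 : 0 ≤ min ((1/(2*(CT+1))) ^ (1/α)) 1 := by
    apply le_min _ zero_le_one
    apply Real.rpow_nonneg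
    have h : 0 < CT + 1 := by linarith
    positivity
  calc porE p γ CT α ≤ porK p γ * 1 :=
        mul_le_mul_of_nonneg_left h1 (porK_pos hp hγ1).le
    _ = porK p γ := mul_one _
    _ ≤ 1/4 := porK_le

lemma good_set_large (hn : 1 ≤ n) (hp : 1 < p) (hγ0 : 0 ≤ γ) (hγ1 : γ < 1)
    {E : Set ((Fin n → ℝ) × ℝ)} (hne : E.Nonempty) {α : ℝ} (hα : 0 < α)
    (hw : IsParA1plusWeight n p γ fun z => parDistToSet n p z E ^ (-α))
    {x : Fin n → ℝ} {t L : ℝ} (hL : 0 < L) {j₀ : ℕ}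
    (hess : essInf (fun z => ENNReal.ofReal (parDistToSet n p z E ^ (-α)))
        (volume.restrict (pRp n p γ x t L)) ≤
      ENNReal.ofReal ((porK p γ * (L / 2 ^ j₀)) ^ (-α))) :
    ENNReal.ofReal (1/2) * volume (pRm n p γ x t L) ≤
      volume {z | z ∈ pRm n p γ x t L ∧
        porE p γ (parA1Const n p γ fun z => parDistToSet n p z E ^ (-α)).toReal α *
          (L / 2 ^ j₀) ≤ parDistToSet n p z E} := by
  set ω : (Fin n → ℝ) × ℝ → ℝ := fun z => parDistToSet n p z E ^ (-α) with hω
  set C : ℝ≥0∞ := parA1Const n p γ ω with hCdef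
  have hC : C < ⊤ := hw.2.2.2
  set CT : ℝ := C.toReal with hCT
  have hCT0 : 0 ≤ CT := ENNReal.toReal_nonneg
  set κ : ℝ := porK p γ with hκdef
  have hκ : 0 < κ := porK_pos hp hγ1
  set e₀ : ℝ := min ((1/(2*(CT+1))) ^ (1/α)) 1 with he₀
  have he₀pos : 0 < e₀ := by
    apply lt_min _ one_pos
    apply Real.rpow_pos_of_pos
    have h : 0 < CT + 1 := by linarith
    positivity
  set ℓ₀ : ℝ := L / 2 ^ j₀ with hℓ₀
  have hℓpos : 0 < ℓ₀ := by positivity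
  have hεdef : porE p γ CT α = κ * e₀ := rfl
  have hεpos : 0 < porE p γ CT α := mul_pos hκ he₀pos
  set v : ℝ≥0∞ := volume (pRm n p γ x t L) with hv
  have hv0 : v ≠ 0 := (volume_pRm_pos hp hγ1 hL).ne'
  have hvt : v ≠ ⊤ := volume_pRm_ne_top
  set f : (Fin n → ℝ) × ℝ → ℝ≥0∞ := fun z => ENNReal.ofReal (ω z) with hf
  set B : ℝ≥0∞ := ENNReal.ofReal ((κ * ℓ₀) ^ (-α)) with hB
  set I : ℝ≥0∞ := ∫⁻ z in pRm n p γ x t L, ENNReal.ofReal (ω z) with hI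
  have h1 : (v⁻¹ * I) / essInf f (volume.restrict (pRp n p γ x t L)) ≤ C :=
    le_iSup_of_le x (le_iSup_of_le t (le_iSup_of_le L (le_iSup_of_le hL le_rfl)))
  have hbne : essInf f (volume.restrict (pRp n p γ x t L)) ≠ ⊤ :=
    fun h => (show (⊤:ℝ≥0∞) ≤ B from h ▸ hess).not_gt ENNReal.ofReal_lt_top
  have h2 : v⁻¹ * I ≤ C * essInf f (volume.restrict (pRp n p γ x t L)) :=
    (ENNReal.div_le_iff_le_mul (Or.inr hC.ne) (Or.inl hbne)).mp h1
  have h3 : v⁻¹ * I ≤ C * B := h2.trans (mul_le_mul_right hess C)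
  have h4 : I ≤ v * (C * B) := by
    have : v * (v⁻¹ * I) = I := by
      rw [← mul_assoc, ENNReal.mul_inv_cancel hv0 hvt, one_mul]
    rw [← this]
    exact mul_le_mul_right h3 v
  -- Chebyshev
  set lam : ℝ≥0∞ := ENNReal.ofReal ((porE p γ CT α * ℓ₀) ^ (-α)) with hlam
  have hlamR : (0:ℝ) < (porE p γ CT α * ℓ₀) ^ (-α) :=
    Real.rpow_pos_of_pos (by positivity) _
  have hlam0 : lam ≠ 0 := (ENNReal.ofReal_pos.mpr hlamR).ne'
  have hlamt : lam ≠ ⊤ := ENNReal.ofReal_ne_top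
  set μr := volume.restrict (pRm n p γ x t L) with hμr
  have hmeas : AEMeasurable f μr :=
    ENNReal.measurable_ofReal.comp_aemeasurable
      (hw.1.aestronglyMeasurable.aemeasurable.restrict)
  have hcheb : lam * μr {z | lam ≤ f z} ≤ I := mul_meas_ge_le_lintegral₀ hmeas lam
  set Bset : Set ((Fin n → ℝ) × ℝ) :=
    {z | z ∈ pRm n p γ x t L ∧ parDistToSet n p z E < porE p γ CT α * ℓ₀} with hBset
  set Gset : Set ((Fin n → ℝ) × ℝ) :=
    {z | z ∈ pRm n p γ x t L ∧ porE p γ CT α * ℓ₀ ≤ parDistToSet n p z E} with hGset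
  have hμrB : volume Bset ≤ μr {z | lam ≤ f z} := by
    have hr : μr Bset = volume Bset := by
      rw [hμr, Measure.restrict_apply' measurableSet_pRm]
      congr 1
      exact Set.inter_eq_self_of_subset_left (fun z hz => hz.1)
    rw [← hr]
    have hsplit : Bset ⊆ {z | lam ≤ f z} ∪ {z | ¬ 0 < ω z} := by
      intro z hz
      by_cases h : 0 < ω z
      · left
        have hd0 : 0 < parDistToSet n p z E := by
          rcases (parDistToSet_nonneg' (z := z) hne).lt_or_eq with h' | h'
          · exact h'
          · exfalso
            rw [hω] at h
            simp only at h
            rw [← h', Real.zero_rpow (by linarith : -α ≠ 0)] at h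
            exact lt_irrefl 0 h
        have : (porE p γ CT α * ℓ₀) ^ (-α) ≤ parDistToSet n p z E ^ (-α) :=
          Real.rpow_le_rpow_of_nonpos hd0 hz.2.le (by linarith)
        exact ENNReal.ofReal_le_ofReal this
      · exact Or.inr h
    have hN : μr {z | ¬ 0 < ω z} = 0 := by
      apply le_antisymm _ (zero_le)
      calc μr {z | ¬ 0 < ω z} ≤ volume {z | ¬ 0 < ω z} :=
            Measure.restrict_le_self _
        _ = 0 := ae_iff.mp hw.2.2.1
    calc μr Bset ≤ μr ({z | lam ≤ f z} ∪ {z | ¬ 0 < ω z}) := measure_mono hsplit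
      _ ≤ μr {z | lam ≤ f z} + μr {z | ¬ 0 < ω z} := measure_union_le _ _
      _ = μr {z | lam ≤ f z} := by rw [hN, add_zero]
  have hchain : lam * volume Bset ≤ v * (C * B) :=
    le_trans (mul_le_mul_right hμrB lam) (hcheb.trans h4)
  -- the key numeric estimate
  have hkey : CT * (κ * ℓ₀) ^ (-α) ≤ (1/2) * (porE p γ CT α * ℓ₀) ^ (-α) := by
    have hsplitR : (porE p γ CT α * ℓ₀) ^ (-α) = (κ * ℓ₀) ^ (-α) * e₀ ^ (-α) := by
      rw [hεdef, show κ * e₀ * ℓ₀ = (κ * ℓ₀) * e₀ by ring,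
        Real.mul_rpow (by positivity) he₀pos.le]
    have hbR : (0:ℝ) < (κ * ℓ₀) ^ (-α) := Real.rpow_pos_of_pos (by positivity) _
    have he₀big : 2 * (CT + 1) ≤ e₀ ^ (-α) := by
      have hs : e₀ ≤ (1/(2*(CT+1))) ^ (1/α) := min_le_left _ _
      have h5 : ((1/(2*(CT+1))) ^ (1/α)) ^ (-α) ≤ e₀ ^ (-α) :=
        Real.rpow_le_rpow_of_nonpos he₀pos hs (by linarith)
      have h6 : ((1/(2*(CT+1))) ^ ((1:ℝ)/α)) ^ (-α) = 2*(CT+1) := by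
        have h : 0 < CT + 1 := by linarith
        rw [← Real.rpow_mul (by positivity)]
        have : (1:ℝ)/α * (-α) = -1 := by field_simp
        rw [this, Real.rpow_neg_one]
        rw [one_div, inv_inv]
      rw [← h6]
      exact h5
    rw [hsplitR]
    nlinarith
  have hCB : v * (C * B) ≤ (ENNReal.ofReal (1/2) * v) * lam := by
    have hCeq : C = ENNReal.ofReal CT := (ENNReal.ofReal_toReal hC.ne).symm
    have : C * B = ENNReal.ofReal (CT * (κ * ℓ₀) ^ (-α)) := by
      rw [hCeq, hB, ← ENNReal.ofReal_mul hCT0]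
    rw [this]
    have h7 : ENNReal.ofReal (CT * (κ * ℓ₀) ^ (-α)) ≤
        ENNReal.ofReal ((1/2) * (porE p γ CT α * ℓ₀) ^ (-α)) :=
      ENNReal.ofReal_le_ofReal hkey
    calc v * ENNReal.ofReal (CT * (κ * ℓ₀) ^ (-α))
        ≤ v * ENNReal.ofReal ((1/2) * (porE p γ CT α * ℓ₀) ^ (-α)) :=
          mul_le_mul_right h7 v
      _ = v * (ENNReal.ofReal (1/2) * lam) := by
          rw [hlam, ← ENNReal.ofReal_mul (by norm_num)]
      _ = (ENNReal.ofReal (1/2) * v) * lam := by ring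
  have hBle : volume Bset ≤ ENNReal.ofReal (1/2) * v := by
    have := hchain.trans hCB
    rw [mul_comm lam (volume Bset)] at this
    exact (ENNReal.mul_le_mul_iff_left hlam0 hlamt).mp this
  -- conclude
  have hcover : pRm n p γ x t L ⊆ Bset ∪ Gset := by
    intro z hz
    rcases lt_or_ge (parDistToSet n p z E) (porE p γ CT α * ℓ₀) with h | h
    · exact Or.inl ⟨hz, h⟩
    · exact Or.inr ⟨hz, h⟩
  have hvle : v ≤ volume Bset + volume Gset :=
    le_trans (measure_mono hcover) (measure_union_le _ _)
  have hhalves : ENNReal.ofReal (1/2) * v + ENNReal.ofReal (1/2) * v = v := by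
    rw [← add_mul, ← ENNReal.ofReal_add (by norm_num) (by norm_num)]
    norm_num
  have : ENNReal.ofReal (1/2) * v + ENNReal.ofReal (1/2) * v ≤
      ENNReal.ofReal (1/2) * v + volume Gset := by
    rw [hhalves]
    calc v ≤ volume Bset + volume Gset := hvle
      _ ≤ ENNReal.ofReal (1/2) * v + volume Gset := add_le_add hBle le_rfl
  exact (ENNReal.add_le_add_iff_left
    (ENNReal.mul_ne_top ENNReal.ofReal_ne_top hvt)).mp this

end StepCD

set_option maxHeartbeats 2000000

/-- if for some `α > 0` the weight `d_p(·,E)^{-α}` belongs to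
the parabolic Muckenhoupt class `A₁⁺(γ)`, then the nonempty proper subset
`E ⊊ ℝ^{n+1}` is `γ`-FIT parabolic weakly porous. -/
theorem stmt19 (n : ℕ) (hn : 1 ≤ n) (p γ : ℝ) (hp : 1 < p)
    (hγ : γ ∈ Ico (0 : ℝ) 1) (E : Set ((Fin n → ℝ) × ℝ))
    (hne : E.Nonempty) (hproper : E ≠ Set.univ)
    (α : ℝ) (hα : 0 < α)
    (hw : IsParA1plusWeight n p γ fun z => parDistToSet n p z E ^ (-α)) :
    FITParWeaklyPorous n p γ E := by
  classical
  obtain ⟨hγ0, hγ1⟩ := hγ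
  set CT : ℝ := (parA1Const n p γ fun z => parDistToSet n p z E ^ (-α)).toReal with hCTdef
  have hCT0 : 0 ≤ CT := ENNReal.toReal_nonneg
  set ε : ℝ := porE p γ CT α with hεdef
  have hε0 : 0 < ε := porE_pos hp hγ1 hCT0 hα
  have hεle : ε ≤ 1/4 := porE_le hp hγ1 hCT0 hα
  -- choose the scale gap m
  have hex : ∃ m : ℕ, (1/2:ℝ) ^ m ≤ ε / 2 := by
    obtain ⟨m, hm⟩ := exists_pow_lt_of_lt_one (show (0:ℝ) < ε/2 by linarith)
      (show (1/2:ℝ) < 1 by norm_num)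
    exact ⟨m, hm.le⟩
  set m : ℕ := Nat.find hex with hmdef
  have hm1 : (1/2:ℝ) ^ m ≤ ε / 2 := Nat.find_spec hex
  have hmpos : 0 < m := by
    rcases Nat.eq_zero_or_pos m with h | h
    · exfalso
      have := hm1
      rw [h, pow_zero] at this
      linarith
    · exact h
  have hm2 : ε / 4 < (1/2:ℝ) ^ m := by
    have hmin : ¬ ((1/2:ℝ) ^ (m-1) ≤ ε / 2) := Nat.find_min hex (Nat.sub_lt hmpos one_pos)
    push_neg at hmin
    have hsplit : (1/2:ℝ) ^ m = (1/2:ℝ) ^ (m-1) * (1/2) := by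
      rw [← pow_succ]
      congr 1
      omega
    rw [hsplit]
    linarith
  -- the porosity constants
  set δ : ℝ := (1-γ) * (ε/4) ^ ((n:ℝ) + p) / 4 with hδdef
  have hrp0 : (0:ℝ) < (ε/4) ^ ((n:ℝ) + p) := Real.rpow_pos_of_pos (by linarith) _
  have hδ0 : 0 < δ := by
    apply div_pos (mul_pos (by linarith) hrp0) (by norm_num)
  have hδ1 : δ < 1 := by
    have h1 : (ε/4) ^ ((n:ℝ) + p) ≤ 1 :=
      Real.rpow_le_one (by linarith) (by linarith) (by positivity)
    rw [hδdef]
    nlinarith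
  refine ⟨1/2, δ, ⟨by norm_num, by norm_num⟩, ⟨hδ0, hδ1⟩, ?_⟩
  intro x t L hL
  -- find the almost-maximal free rectangle
  have hM0 := maxFreeVol_ne_zero (E := E) (x := x) (t := t) hn hp hγ0 hγ1 hne hL hα hw.2.2.1
  obtain ⟨P₀, hdy₀, hfree₀, hM2⟩ := exists_P0 hp hγ1 hM0
  obtain ⟨hsub₀, j₀, y₀, s₀, τ₀, hPdef₀, hτlow₀, hτhigh₀⟩ := hdy₀
  have hess := essInf_le_of_freeRect hn hp hγ0 hγ1 hne hL hα hsub₀ hPdef₀ hτlow₀ hfree₀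
  have hGood := good_set_large hn hp hγ0 hγ1 hne hα hw hL hess
  rw [← hCTdef, ← hεdef] at hGood
  set ℓ₀ : ℝ := L / 2 ^ j₀ with hℓ₀
  have hℓ₀pos : 0 < ℓ₀ := by positivity
  set Gset : Set ((Fin n → ℝ) × ℝ) :=
    {z | z ∈ pRm n p γ x t L ∧ ε * ℓ₀ ≤ parDistToSet n p z E} with hGsetdef
  set k : ℕ := j₀ + m with hkdef
  set ℓ : ℝ := L / 2 ^ k with hℓdef
  have hℓpos : 0 < ℓ := by positivity
  have hℓeq : ℓ = ℓ₀ * (1/2:ℝ) ^ m := by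
    rw [hℓdef, hkdef, pow_add, hℓ₀, div_pow, one_pow, div_mul_div_comm, mul_one]
  have hℓub : ℓ ≤ ε * ℓ₀ / 2 := by
    rw [hℓeq]
    nlinarith
  have hℓlb : ε / 4 * ℓ₀ ≤ ℓ := by
    rw [hℓeq]
    nlinarith
  -- the grid
  set cell : ((Fin n → Fin (2^(k+1))) × Fin (gridm p k)) → Set ((Fin n → ℝ) × ℝ) :=
    fun q => gridCell n p γ x t L k (fun i => (q.1 i : ℕ), (q.2 : ℕ)) with hcell
  set S : Finset ((Fin n → Fin (2^(k+1))) × Fin (gridm p k)) :=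
    Finset.univ.filter (fun q => (cell q ∩ Gset).Nonempty) with hS
  set N : ℕ := S.card with hN
  set P : Fin N → Set ((Fin n → ℝ) × ℝ) := fun i => cell (S.equivFin.symm i).val with hPdef
  -- each cell of the family is a dyadic rectangle of R⁻
  have hdyadic : ∀ q, IsParDyadicRect n p γ L (pRm n p γ x t L) (cell q) := by
    intro q
    exact gridCell_isDyadic hn hp hγ0 hγ1 hL k (fun i => (q.1 i).isLt) (q.2).isLt
  -- cells intersecting Gset avoid E
  have hEfree : ∀ q ∈ S, cell q ∩ E = ∅ := by
    intro q hq
    rw [hS, Finset.mem_filter] at hq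
    obtain ⟨-, z, hzc, hzG⟩ := hq
    rw [Set.eq_empty_iff_forall_notMem]
    rintro w ⟨hwc, hwE⟩
    have hτle : gridτ p γ L k ≤ (ε * ℓ₀ / 2) ^ p := by
      have h1 : gridτ p γ L k ≤ (1-γ) * L ^ p / (2:ℝ) ^ (p * (k:ℝ)) :=
        gridτ_le hp hγ1 hL k
      have hLp : (0:ℝ) < L ^ p := Real.rpow_pos_of_pos hL p
      have h2 : (1-γ) * L ^ p / (2:ℝ) ^ (p * (k:ℝ)) ≤ L ^ p / (2:ℝ) ^ (p * (k:ℝ)) := by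
        apply div_le_div_of_nonneg_right ?_ (by positivity)
        nlinarith
      have h3 : L ^ p / (2:ℝ) ^ (p * (k:ℝ)) = ℓ ^ p := (div_pow_rpow hL k).symm
      have h4 : ℓ ^ p ≤ (ε * ℓ₀ / 2) ^ p :=
        Real.rpow_le_rpow hℓpos.le hℓub (by linarith)
      linarith
    simp only [hcell, gridCell] at hzc hwc
    have hdle : parDist n p z w ≤ ε * ℓ₀ / 2 :=
      parDist_le_of_mem_cell hn hp (by positivity) hℓub hτle hzc hwc
    have hge : ε * ℓ₀ ≤ parDistToSet n p z E := hzG.2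
    have hle : parDistToSet n p z E ≤ parDist n p z w := parDistToSet_le' hwE
    nlinarith
  -- per-cell volume lower bound
  have hvolcell : ∀ q, ENNReal.ofReal δ * maxFreeVol n p γ E x t L ≤ volume (cell q) := by
    intro q
    have hvol₀ : volume P₀ = ENNReal.ofReal (ℓ₀ ^ n * τ₀) := by
      rw [hPdef₀, volume_cell, ← ENNReal.ofReal_pow hℓ₀pos.le, ← ENNReal.ofReal_mul (by positivity)]
    have hτ₀ub : τ₀ ≤ ℓ₀ ^ p := by
      have h1 : (1-γ) * L ^ p / (2:ℝ) ^ (p * (j₀:ℝ)) ≤ L ^ p / (2:ℝ) ^ (p * (j₀:ℝ)) := by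
        have hLp : (0:ℝ) < L ^ p := Real.rpow_pos_of_pos hL p
        apply div_le_div_of_nonneg_right ?_ (by positivity)
        nlinarith
      have h2 : L ^ p / (2:ℝ) ^ (p * (j₀:ℝ)) = ℓ₀ ^ p := (div_pow_rpow hL j₀).symm
      linarith [hτhigh₀]
    have hτ₀pos : 0 < τ₀ := by
      have := hτlow₀
      have hLp : (0:ℝ) < L ^ p := Real.rpow_pos_of_pos hL p
      have h2 : (0:ℝ) < (1 - γ) * L ^ p / (2:ℝ) ^ (p * (j₀:ℝ)) / 2 := by
        apply div_pos (div_pos (by nlinarith) (by positivity)) (by norm_num)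
      linarith
    have hgτge : (1-γ) * ℓ ^ p / 2 ≤ gridτ p γ L k := by
      have h1 := gridτ_ge hp hγ1 hL (L := L) k
      have h2 : L ^ p / (2:ℝ) ^ (p * (k:ℝ)) = ℓ ^ p := (div_pow_rpow hL k).symm
      calc (1-γ) * ℓ ^ p / 2 = (1-γ) * (L ^ p / (2:ℝ) ^ (p * (k:ℝ))) / 2 := by rw [h2]
        _ = (1-γ) * L ^ p / (2:ℝ) ^ (p * (k:ℝ)) / 2 := by ring
        _ ≤ gridτ p γ L k := h1
    -- the real inequality
    have hreal : δ * (2 * (ℓ₀ ^ n * τ₀)) ≤ ℓ ^ n * gridτ p γ L k := by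
      have hℓp : (0:ℝ) < ℓ ^ p := Real.rpow_pos_of_pos hℓpos p
      have hℓ₀p : (0:ℝ) < ℓ₀ ^ p := Real.rpow_pos_of_pos hℓ₀pos p
      have e3 : (ε/4 * ℓ₀) ^ n ≤ ℓ ^ n := by
        apply pow_le_pow_left₀ (by positivity) ?_ n
        calc ε/4 * ℓ₀ = ε / 4 * ℓ₀ := rfl
          _ ≤ ℓ := hℓlb
      have e4 : (ε/4 * ℓ₀) ^ p ≤ ℓ ^ p :=
        Real.rpow_le_rpow (by positivity) hℓlb (by linarith)
      have e5 : (ε/4 * ℓ₀) ^ n = (ε/4) ^ n * ℓ₀ ^ n := mul_pow _ _ _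
      have e6 : (ε/4 * ℓ₀) ^ p = (ε/4) ^ p * ℓ₀ ^ p :=
        Real.mul_rpow (by linarith) hℓ₀pos.le
      have e7 : (ε/4) ^ ((n:ℝ) + p) = (ε/4) ^ n * (ε/4) ^ p := by
        rw [Real.rpow_add (by linarith), Real.rpow_natCast]
      calc δ * (2 * (ℓ₀ ^ n * τ₀)) ≤ δ * (2 * (ℓ₀ ^ n * ℓ₀ ^ p)) := by
            have h0 : (0:ℝ) ≤ ℓ₀ ^ n := by positivity
            exact mul_le_mul_of_nonneg_left (mul_le_mul_of_nonneg_left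
              (mul_le_mul_of_nonneg_left hτ₀ub h0) (by norm_num)) hδ0.le
        _ = (1-γ)/2 * (((ε/4) ^ n * ℓ₀ ^ n) * ((ε/4) ^ p * ℓ₀ ^ p)) := by
            rw [hδdef, e7]; ring
        _ = (1-γ)/2 * ((ε/4 * ℓ₀) ^ n * (ε/4 * ℓ₀) ^ p) := by rw [e5, e6]
        _ ≤ (1-γ)/2 * (ℓ ^ n * ℓ ^ p) := by
            have h2 : (0:ℝ) ≤ (ε/4 * ℓ₀) ^ p := Real.rpow_nonneg (by positivity) _
            exact mul_le_mul_of_nonneg_left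
              (mul_le_mul e3 e4 h2 (by positivity)) (by linarith)
        _ = ℓ ^ n * ((1-γ) * ℓ ^ p / 2) := by ring
        _ ≤ ℓ ^ n * gridτ p γ L k := by
            apply mul_le_mul_of_nonneg_left hgτge (by positivity)
    calc ENNReal.ofReal δ * maxFreeVol n p γ E x t L
        ≤ ENNReal.ofReal δ * (2 * volume P₀) := mul_le_mul_right hM2 _
      _ = ENNReal.ofReal (δ * (2 * (ℓ₀ ^ n * τ₀))) := by
          rw [hvol₀, show (2:ℝ≥0∞) = ENNReal.ofReal 2 by norm_num,
            ← ENNReal.ofReal_mul (by norm_num), ← ENNReal.ofReal_mul hδ0.le]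
      _ ≤ ENNReal.ofReal (ℓ ^ n * gridτ p γ L k) := ENNReal.ofReal_le_ofReal hreal
      _ = volume (cell q) := by
          rw [hcell, volume_gridCell, ← ENNReal.ofReal_pow hℓpos.le,
            ← ENNReal.ofReal_mul (by positivity)]
  -- Gset is covered by the selected cells
  have hGcover : Gset ⊆ ⋃ q ∈ S, cell q := by
    intro z hz
    obtain ⟨ab, ha, hb, hmem⟩ := mem_gridCell_of_mem_pRm hp hγ0 hγ1 hL k hz.1
    set q : (Fin n → Fin (2^(k+1))) × Fin (gridm p k) :=
      (fun i => ⟨ab.1 i, ha i⟩, ⟨ab.2, hb⟩) with hq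
    have hcq : cell q = gridCell n p γ x t L k ab := rfl
    have hzq : z ∈ cell q := by rw [hcq]; exact hmem
    have hqS : q ∈ S := by
      rw [hS, Finset.mem_filter]
      exact ⟨Finset.mem_univ _, ⟨z, hzq, hz⟩⟩
    exact Set.mem_biUnion hqS hzq
  have hsum : volume Gset ≤ ∑ i : Fin N, volume (P i) := by
    have h1 : volume Gset ≤ ∑ q ∈ S, volume (cell q) :=
      le_trans (measure_mono hGcover) (measure_biUnion_finset_le S cell)
    have h2 : ∑ i : Fin N, volume (P i) = ∑ q ∈ S, volume (cell q) := by
      rw [hPdef]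
      rw [← Finset.sum_coe_sort S (fun q => volume (cell q))]
      exact Equiv.sum_comp S.equivFin.symm (fun q => volume (cell q.val))
    rw [h2]
    exact h1
  have hhalf : ENNReal.ofReal (1/2) * volume (pRm n p γ x t L) ≤ volume Gset := hGood
  have hNpos : 0 < N := by
    rw [hN, Finset.card_pos]
    have hGne : Gset.Nonempty := by
      apply nonempty_of_measure_ne_zero (μ := volume)
      intro h0
      rw [h0] at hhalf
      have : ENNReal.ofReal (1/2) * volume (pRm n p γ x t L) ≠ 0 :=
        (ENNReal.mul_pos (ENNReal.ofReal_pos.mpr (by norm_num)).ne'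
          (volume_pRm_pos hp hγ1 hL).ne').ne'
      exact this (le_antisymm hhalf (zero_le))
    obtain ⟨z, hz⟩ := hGne
    obtain ⟨ab, ha, hb, hmem⟩ := mem_gridCell_of_mem_pRm hp hγ0 hγ1 hL k hz.1
    refine ⟨(fun i => ⟨ab.1 i, ha i⟩, ⟨ab.2, hb⟩), ?_⟩
    rw [hS, Finset.mem_filter]
    exact ⟨Finset.mem_univ _, ⟨z, hmem, hz⟩⟩
  -- assemble
  refine ⟨N, P, hNpos, fun i => hdyadic _, ?_, ?_, fun i => hvolcell _, ?_⟩
  · intro i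
    exact hEfree _ (S.equivFin.symm i).property
  · intro i _ j _ hij
    have hne' : (S.equivFin.symm i).val ≠ (S.equivFin.symm j).val := by
      intro hconeq
      exact hij (by
        have := Subtype.ext hconeq
        have h2 := S.equivFin.symm.injective this
        exact h2)
    have hne'' : (fun i' => ((S.equivFin.symm i).val.1 i' : ℕ), ((S.equivFin.symm i).val.2 : ℕ)) ≠
        (fun i' => ((S.equivFin.symm j).val.1 i' : ℕ), ((S.equivFin.symm j).val.2 : ℕ)) := by
      intro hcon
      apply hne'
      have h1 := congrArg Prod.fst hcon
      have h2 := congrArg Prod.snd hcon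
      simp only at h1 h2
      ext i'
      · exact congrFun h1 i' ▸ rfl
      · exact_mod_cast h2
    exact gridCell_disjoint hp hγ1 hL k hne''
  · calc ENNReal.ofReal (1/2) * volume (pRm n p γ x t L) ≤ volume Gset := hhalf
      _ ≤ ∑ i : Fin N, volume (P i) := hsum
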